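/- Let p and q be real numbers with 0 < q < p ≤ 1, let j be a natural number, and let θ be a real number with 0 ≤ θ < p/(p−q). Then the series Σ_{x=j}^{∞} [x]_{j,p,q} · p^{x(x−1)/2} · θ^x / [x]_{p,q}! converges and its sum equals θ^j · p^{j(j−1)/2} · e_{p,q}(p^j θ), where e_{p,q}(p^j θ) = Σ_{h=0}^{∞} p^{h(h−1)/2} (p^j θ)^h/[h]_{p,q}! (this series converges since p^j θ < p/(p−q)). Consequently, the j-th order (p,q)-factorial moment of the (p,q)-Euler distribution P(X = x) = E_{p,q}(−θ) · p^{x(x−1)/2} θ^x/[x]_{p,q}! equals θ^j · p^{j(j−1)/2} · E_{p,q}(−θ) · e_{p,q}(p^j θ). -/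
import Mathlib


/-- The (p,q)-deformed number `[n]_{p,q} = (p^n - q^n)/(p - q)` for `n ∈ ℕ`. -/
noncomputable def pqNumN (p q : ℝ) (n : ℕ) : ℝ := (p ^ n - q ^ n) / (p - q)

/-- The (p,q)-factorial `[n]_{p,q}! = ∏_{i=1}^n [i]_{p,q}`. -/
noncomputable def pqFac (p q : ℝ) (n : ℕ) : ℝ := ∏ i ∈ Finset.range n, pqNumN p q (i + 1)

/-- The j-th order (p,q)-factorial `[x]_{j,p,q} = ∏_{v=0}^{j-1} [x-v]_{p,q}` for `x ∈ ℕ`. -/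
noncomputable def pqFacOrdN (p q : ℝ) (x j : ℕ) : ℝ :=
  ∏ v ∈ Finset.range j, pqNumN p q (x - v)

lemma pqNumN_pos {p q : ℝ} (hq : 0 < q) (hqp : q < p) {n : ℕ} (hn : n ≠ 0) :
    0 < pqNumN p q n :=
  div_pos (sub_pos.2 (pow_lt_pow_left₀ hqp hq.le hn)) (sub_pos.2 hqp)

lemma pqFac_pos {p q : ℝ} (hq : 0 < q) (hqp : q < p) (n : ℕ) : 0 < pqFac p q n :=
  Finset.prod_pos fun i _ => pqNumN_pos hq hqp (Nat.succ_ne_zero i)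

lemma pqFacOrdN_pos {p q : ℝ} (hq : 0 < q) (hqp : q < p) (j k : ℕ) :
    0 < pqFacOrdN p q (j + k) j :=
  Finset.prod_pos fun v hv => pqNumN_pos hq hqp (by
    have := Finset.mem_range.1 hv; omega)

lemma pqFac_split (p q : ℝ) (j k : ℕ) :
    pqFac p q (j + k) = pqFac p q k * pqFacOrdN p q (j + k) j := by
  induction j with
  | zero => simp [pqFacOrdN]
  | succ j ih =>
    have h1 : pqFac p q (j + 1 + k) = pqFac p q (j + k) * pqNumN p q (j + k + 1) := by
      have : j + 1 + k = (j + k) + 1 := by omega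
      rw [this, pqFac, Finset.prod_range_succ]; rfl
    have h2 : pqFacOrdN p q (j + 1 + k) (j + 1)
        = pqFacOrdN p q (j + k) j * pqNumN p q (j + k + 1) := by
      rw [pqFacOrdN, Finset.prod_range_succ']
      congr 1
      · apply Finset.prod_congr rfl
        intro v hv
        congr 1
        omega
      · congr 1
        omega
    rw [h1, ih, h2]; ring

lemma choose_two_succ (n : ℕ) : (n + 1).choose 2 = n.choose 2 + n := by
  simp [Nat.choose_succ_succ, Nat.choose_one_right, Nat.add_comm]

lemma choose_two_add (j k : ℕ) : (j + k).choose 2 = j.choose 2 + k.choose 2 + j * k := by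
  induction k with
  | zero => simp
  | succ k ih =>
    have h1 : (j + (k+1)).choose 2 = (j + k).choose 2 + (j + k) := by
      have h : j + (k + 1) = (j + k) + 1 := by omega
      rw [h, choose_two_succ]
    have h2 : (k+1).choose 2 = k.choose 2 + k := choose_two_succ k
    rw [h1, h2, ih]; ring

/-- The j-th order (p,q)-factorial moment of the (p,q)-Euler distribution:
`Σ_{x=j}^{∞} [x]_{j,p,q} p^{x(x-1)/2} θ^x/[x]_{p,q}! = θ^j p^{j(j-1)/2} e_{p,q}(p^j θ)`, and
consequently the moment of the full distribution (with normalizing factor `E_{p,q}(-θ)`)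
equals `θ^j p^{j(j-1)/2} E_{p,q}(-θ) e_{p,q}(p^j θ)`. -/
theorem pq_euler_distribution_factorial_moment (p q : ℝ) (hq : 0 < q) (hqp : q < p)
    (hp : p ≤ 1) (j : ℕ) (θ : ℝ) (hθ0 : 0 ≤ θ) (hθ : θ < p / (p - q)) :
    HasSum
      (fun k : ℕ =>
        pqFacOrdN p q (j + k) j * p ^ ((j + k).choose 2) * θ ^ (j + k) / pqFac p q (j + k))
      (θ ^ j * p ^ j.choose 2 *
        ∑' h : ℕ, p ^ h.choose 2 * (p ^ j * θ) ^ h / pqFac p q h) ∧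
    HasSum
      (fun k : ℕ =>
        pqFacOrdN p q (j + k) j *
          ((∑' n : ℕ, q ^ n.choose 2 * (-θ) ^ n / pqFac p q n) *
            (p ^ ((j + k).choose 2) * θ ^ (j + k) / pqFac p q (j + k))))
      (θ ^ j * p ^ j.choose 2 *
        (∑' n : ℕ, q ^ n.choose 2 * (-θ) ^ n / pqFac p q n) *
        ∑' h : ℕ, p ^ h.choose 2 * (p ^ j * θ) ^ h / pqFac p q h) := by
  have hp0 : (0:ℝ) < p := hq.trans hqp
  have hpq : (0:ℝ) < p - q := sub_pos.2 hqp
  set z : ℝ := p ^ j * θ with hzdef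
  have hz0 : 0 ≤ z := mul_nonneg (pow_nonneg hp0.le j) hθ0
  have hz : z < p / (p - q) := by
    calc z ≤ θ := by
          have : p ^ j ≤ 1 := pow_le_one₀ hp0.le hp
          nlinarith
      _ < _ := hθ
  have hzp : z * (p - q) < p := (lt_div_iff₀ hpq).1 hz
  set g : ℕ → ℝ := fun k => p ^ k.choose 2 * z ^ k / pqFac p q k with hgdef
  have hgpos : ∀ k, 0 ≤ g k := fun k =>
    div_nonneg (mul_nonneg (pow_nonneg hp0.le _) (pow_nonneg hz0 _)) (pqFac_pos hq hqp k).le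
  have hgstep : ∀ k, g (k + 1) = g k * (p ^ k * z / pqNumN p q (k + 1)) := by
    intro k
    have hf : pqFac p q (k+1) = pqFac p q k * pqNumN p q (k+1) := by
      rw [pqFac, Finset.prod_range_succ]; rfl
    have hc : (k+1).choose 2 = k.choose 2 + k := choose_two_succ k
    have hN : pqNumN p q (k+1) ≠ 0 := (pqNumN_pos hq hqp (Nat.succ_ne_zero k)).ne'
    have hF : pqFac p q k ≠ 0 := (pqFac_pos hq hqp k).ne'
    simp only [hgdef, hf, hc, pow_add, pow_succ]
    field_simp
  -- ratio bound
  set r : ℝ := (z * (p - q) / p + 1) / 2 with hrdef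
  have hx0 : 0 ≤ z * (p - q) / p := div_nonneg (mul_nonneg hz0 hpq.le) hp0.le
  have hx1 : z * (p - q) / p < 1 := (div_lt_one hp0).2 hzp
  have hr1 : r < 1 := by rw [hrdef]; linarith
  have hr0 : 0 < r := by rw [hrdef]; linarith
  have hzr : z * (p - q) < r * p := by
    have : z * (p - q) / p < r := by rw [hrdef]; linarith
    calc z * (p - q) = (z * (p-q)/p) * p := by field_simp
      _ < r * p := by nlinarith
  have htend : Filter.Tendsto (fun k : ℕ => r * q * (q / p) ^ k) Filter.atTop (nhds 0) := by
    have := (tendsto_pow_atTop_nhds_zero_of_lt_one (div_nonneg hq.le hp0.le)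
      ((div_lt_one hp0).2 hqp)).const_mul (r * q)
    simpa using this
  have hev : ∀ᶠ k in Filter.atTop, ‖g (k+1)‖ ≤ r * ‖g k‖ := by
    have hlt : ∀ᶠ k in Filter.atTop, r * q * (q / p) ^ k < r * p - z * (p - q) := by
      have hpos : (0:ℝ) < r * p - z * (p - q) := by linarith
      exact htend.eventually_lt_const hpos
    filter_upwards [hlt] with k hk
    have hpk : (0:ℝ) < p ^ k := pow_pos hp0 k
    have hqk : r * q * (q / p) ^ k * p ^ k = r * q ^ (k+1) := by
      rw [div_pow]
      field_simp
      ring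
    have hkey : z * (p - q) * p ^ k < r * (p ^ (k+1) - q ^ (k+1)) := by
      have h2 := mul_lt_mul_of_pos_right hk hpk
      rw [hqk] at h2
      have hps : p ^ (k+1) = p * p ^ k := pow_succ' p k
      nlinarith [h2]
    have hNpos : 0 < pqNumN p q (k+1) := pqNumN_pos hq hqp (Nat.succ_ne_zero k)
    have hratio : p ^ k * z / pqNumN p q (k+1) ≤ r := by
      rw [div_le_iff₀ hNpos, pqNumN, mul_div_assoc', le_div_iff₀ hpq]
      nlinarith [hkey]
    rw [hgstep k, Real.norm_of_nonneg (hgpos _), Real.norm_of_nonneg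
      (by nlinarith [hgpos k, hNpos.le, hpk.le, hz0, div_nonneg (mul_nonneg hpk.le hz0) hNpos.le] : (0:ℝ) ≤ g k * (p ^ k * z / pqNumN p q (k+1)))]
    calc g k * (p ^ k * z / pqNumN p q (k+1)) ≤ g k * r :=
          mul_le_mul_of_nonneg_left hratio (hgpos k)
      _ = r * g k := mul_comm _ _
  have hsum : Summable g := summable_of_ratio_norm_eventually_le hr1 hev
  have hg : HasSum g (∑' k, g k) := hsum.hasSum
  have hterm : ∀ k : ℕ,
      pqFacOrdN p q (j + k) j * p ^ ((j + k).choose 2) * θ ^ (j + k) / pqFac p q (j + k)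
        = θ ^ j * p ^ j.choose 2 * g k := by
    intro k
    have hF : pqFac p q k ≠ 0 := (pqFac_pos hq hqp k).ne'
    have hO : pqFacOrdN p q (j + k) j ≠ 0 := (pqFacOrdN_pos hq hqp j k).ne'
    rw [pqFac_split p q j k, choose_two_add, hgdef]
    simp only [hzdef, mul_pow, ← pow_mul, pow_add]
    field_simp
  have h1 : HasSum
      (fun k : ℕ =>
        pqFacOrdN p q (j + k) j * p ^ ((j + k).choose 2) * θ ^ (j + k) / pqFac p q (j + k))
      (θ ^ j * p ^ j.choose 2 * ∑' h : ℕ, p ^ h.choose 2 * (p ^ j * θ) ^ h / pqFac p q h) := by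
    have h := hg.mul_left (θ ^ j * p ^ j.choose 2)
    have heq : (fun k : ℕ =>
        pqFacOrdN p q (j + k) j * p ^ ((j + k).choose 2) * θ ^ (j + k) / pqFac p q (j + k))
        = fun k => θ ^ j * p ^ j.choose 2 * g k := funext fun k => hterm k
    rw [heq]
    exact h
  refine ⟨h1, ?_⟩
  set E : ℝ := ∑' n : ℕ, q ^ n.choose 2 * (-θ) ^ n / pqFac p q n with hEdef
  have hfe : (fun k : ℕ =>
      pqFacOrdN p q (j + k) j *
        (E * (p ^ ((j + k).choose 2) * θ ^ (j + k) / pqFac p q (j + k))))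
      = fun k => E * (pqFacOrdN p q (j + k) j * p ^ ((j + k).choose 2) * θ ^ (j + k) / pqFac p q (j + k)) := by
    funext k; ring
  rw [hfe]
  have : θ ^ j * p ^ j.choose 2 * E * (∑' h : ℕ, p ^ h.choose 2 * (p ^ j * θ) ^ h / pqFac p q h)
      = E * (θ ^ j * p ^ j.choose 2 * ∑' h : ℕ, p ^ h.choose 2 * (p ^ j * θ) ^ h / pqFac p q h) := by
    ring
  rw [this]
  exact h1.mul_left E
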